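/- Assume σ(t) ≠ 0 for all t. Then the curvature and torsion of the evolute e (computed by the formulas for a not-necessarily-unit-speed curve) are k_e = ‖e' × e''‖/‖e'‖³ = |τ|/|σ| and τ_e = det(e', e'', e''')/‖e' × e''‖² = k/σ at every point. -/

import Mathlib

open scoped RealInnerProductSpace

noncomputable section

/-- The determinant of the 3×3 matrix with rows `u`, `v`, `w`. -/
def det3 (u v w : EuclideanSpace ℝ (Fin 3)) : ℝ :=
  u 0 * (v 1 * w 2 - v 2 * w 1) - u 1 * (v 0 * w 2 - v 2 * w 0)
    + u 2 * (v 0 * w 1 - v 1 * w 0)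

/-- The cross product of two vectors in `ℝ³`. -/
def cross3 (u v : EuclideanSpace ℝ (Fin 3)) : EuclideanSpace ℝ (Fin 3) :=
  (WithLp.equiv 2 (Fin 3 → ℝ)).symm
    ![u 1 * v 2 - u 2 * v 1, u 2 * v 0 - u 0 * v 2, u 0 * v 1 - u 1 * v 0]

abbrev E3 := EuclideanSpace ℝ (Fin 3)

namespace Aux

lemma c0 (u v : E3) : cross3 u v 0 = u 1 * v 2 - u 2 * v 1 := rfl
lemma c1 (u v : E3) : cross3 u v 1 = u 2 * v 0 - u 0 * v 2 := rfl
lemma c2 (u v : E3) : cross3 u v 2 = u 0 * v 1 - u 1 * v 0 := rfl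

lemma ext3 {u v : E3} (h0 : u 0 = v 0) (h1 : u 1 = v 1) (h2 : u 2 = v 2) : u = v := by
  ext i; fin_cases i; exacts [h0, h1, h2]

lemma inner3 (u v : E3) : ⟪u, v⟫ = u 0 * v 0 + u 1 * v 1 + u 2 * v 2 := by
  simp [PiLp.inner_apply, Fin.sum_univ_three]; ring

lemma sm (a : ℝ) (u : E3) (i : Fin 3) : (a • u) i = a * u i := rfl
lemma ad (u v : E3) (i : Fin 3) : (u + v) i = u i + v i := rfl
lemma sb (u v : E3) (i : Fin 3) : (u - v) i = u i - v i := rfl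
lemma ng (u : E3) (i : Fin 3) : (-u) i = -(u i) := rfl
lemma ze (i : Fin 3) : (0 : E3) i = 0 := rfl

lemma cross_smul_left (a : ℝ) (u v : E3) : cross3 (a • u) v = a • cross3 u v := by
  apply ext3 <;> simp only [c0, c1, c2, sm] <;> ring

lemma cross_smul_right (a : ℝ) (u v : E3) : cross3 u (a • v) = a • cross3 u v := by
  apply ext3 <;> simp only [c0, c1, c2, sm] <;> ring

lemma cross_add_right (u v w : E3) : cross3 u (v + w) = cross3 u v + cross3 u w := by
  apply ext3 <;> simp only [c0, c1, c2, ad] <;> ring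

lemma cross_sub_right (u v w : E3) : cross3 u (v - w) = cross3 u v - cross3 u w := by
  apply ext3 <;> simp only [c0, c1, c2, sb] <;> ring

lemma cross_self (u : E3) : cross3 u u = 0 := by
  apply ext3 <;> simp only [c0, c1, c2, ze] <;> ring

lemma cross_anticomm (u v : E3) : cross3 u v = -cross3 v u := by
  apply ext3 <;> simp only [c0, c1, c2, ng] <;> ring

lemma triple (u v w : E3) : cross3 u (cross3 v w) = ⟪u, w⟫ • v - ⟪u, v⟫ • w := by
  apply ext3 <;> simp only [c0, c1, c2, sb, sm, inner3] <;> ring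

lemma det3_eq_inner (u v w : E3) : det3 u v w = ⟪cross3 u v, w⟫ := by
  simp only [det3, inner3, c0, c1, c2]; ring

lemma inner_self_cross (u v : E3) : ⟪u, cross3 u v⟫ = 0 := by
  simp only [inner3, c0, c1, c2]; ring

lemma inner_right_cross (u v : E3) : ⟪v, cross3 u v⟫ = 0 := by
  simp only [inner3, c0, c1, c2]; ring

lemma lagrange (u v : E3) : ⟪cross3 u v, cross3 u v⟫ = ⟪u,u⟫ * ⟪v,v⟫ - ⟪u,v⟫^2 := by
  simp only [inner3, c0, c1, c2]; ring

lemma det3_smul_mid (a : ℝ) (u v w : E3) : det3 u (a • v) w = a * det3 u v w := by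
  simp only [det3, sm]; ring

lemma det3_mid_eq_right (u v : E3) : det3 u v v = 0 := by simp only [det3]; ring

/-- Orthonormal expansion in ℝ³. -/
lemma expansion (a b v : E3) (h1 : ⟪a,a⟫ = 1) (h2 : ⟪b,b⟫ = 1) (h3 : ⟪a,b⟫ = 0) :
    v = ⟪v,a⟫ • a + ⟪v,b⟫ • b + ⟪v, cross3 a b⟫ • cross3 a b := by
  simp only [inner3] at h1 h2 h3
  apply ext3 <;> simp only [c0, c1, c2, sm, ad, inner3] <;>
  [ (linear_combination (-(b 0^2 + b 1^2 + b 2^2) * v 0 + b 0 * (v 0 * b 0 + v 1 * b 1 + v 2 * b 2)) * h1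
      + (-(v 0) + a 0 * (v 0 * a 0 + v 1 * a 1 + v 2 * a 2)) * h2
      + (-(a 0 * (v 0 * b 0 + v 1 * b 1 + v 2 * b 2)) - b 0 * (v 0 * a 0 + v 1 * a 1 + v 2 * a 2)
         + (a 0 * b 0 + a 1 * b 1 + a 2 * b 2) * v 0) * h3);
    (linear_combination (-(b 0^2 + b 1^2 + b 2^2) * v 1 + b 1 * (v 0 * b 0 + v 1 * b 1 + v 2 * b 2)) * h1
      + (-(v 1) + a 1 * (v 0 * a 0 + v 1 * a 1 + v 2 * a 2)) * h2
      + (-(a 1 * (v 0 * b 0 + v 1 * b 1 + v 2 * b 2)) - b 1 * (v 0 * a 0 + v 1 * a 1 + v 2 * a 2)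
         + (a 0 * b 0 + a 1 * b 1 + a 2 * b 2) * v 1) * h3);
    (linear_combination (-(b 0^2 + b 1^2 + b 2^2) * v 2 + b 2 * (v 0 * b 0 + v 1 * b 1 + v 2 * b 2)) * h1
      + (-(v 2) + a 2 * (v 0 * a 0 + v 1 * a 1 + v 2 * a 2)) * h2
      + (-(a 2 * (v 0 * b 0 + v 1 * b 1 + v 2 * b 2)) - b 2 * (v 0 * a 0 + v 1 * a 1 + v 2 * a 2)
         + (a 0 * b 0 + a 1 * b 1 + a 2 * b 2) * v 2) * h3)]

lemma hasDerivAt_E3 {f : ℝ → E3} {f' : E3} {t : ℝ}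
    (h : ∀ i, HasDerivAt (fun s => f s i) (f' i) t) : HasDerivAt f f' t :=
  ((PiLp.continuousLinearEquiv 2 ℝ (fun _ : Fin 3 => ℝ)).symm.hasFDerivAt.comp_hasDerivAt t
    (hasDerivAt_pi.2 h) : _)

lemma hasDerivAt_apply3 {f : ℝ → E3} {f' : E3} {t : ℝ} (hf : HasDerivAt f f' t) (i : Fin 3) :
    HasDerivAt (fun s => f s i) (f' i) t :=
  ((EuclideanSpace.proj i : E3 →L[ℝ] ℝ).hasFDerivAt.comp_hasDerivAt t hf : _)

lemma hasDerivAt_cross {u v : ℝ → E3} {u' v' : E3} {t : ℝ}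
    (hu : HasDerivAt u u' t) (hv : HasDerivAt v v' t) :
    HasDerivAt (fun s => cross3 (u s) (v s)) (cross3 u' (v t) + cross3 (u t) v') t := by
  apply hasDerivAt_E3
  intro i
  fin_cases i
  · exact (((hasDerivAt_apply3 hu 1).mul (hasDerivAt_apply3 hv 2)).sub
      ((hasDerivAt_apply3 hu 2).mul (hasDerivAt_apply3 hv 1))).congr_deriv
      (by show _ = u' 1 * v t 2 - u' 2 * v t 1 + (u t 1 * v' 2 - u t 2 * v' 1); ring)
  · exact (((hasDerivAt_apply3 hu 2).mul (hasDerivAt_apply3 hv 0)).sub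
      ((hasDerivAt_apply3 hu 0).mul (hasDerivAt_apply3 hv 2))).congr_deriv
      (by show _ = u' 2 * v t 0 - u' 0 * v t 2 + (u t 2 * v' 0 - u t 0 * v' 2); ring)
  · exact (((hasDerivAt_apply3 hu 0).mul (hasDerivAt_apply3 hv 1)).sub
      ((hasDerivAt_apply3 hu 1).mul (hasDerivAt_apply3 hv 0))).congr_deriv
      (by show _ = u' 0 * v t 1 - u' 1 * v t 0 + (u t 0 * v' 1 - u t 1 * v' 0); ring)

lemma contDiff_apply3 {f : ℝ → E3} (hf : ContDiff ℝ (⊤:ℕ∞) f) (i : Fin 3) :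
    ContDiff ℝ (⊤:ℕ∞) (fun t => f t i) :=
  (EuclideanSpace.proj i : E3 →L[ℝ] ℝ).contDiff.comp hf

end Aux

open Aux in
theorem stmt_5
    (ξ : ℝ → EuclideanSpace ℝ (Fin 3))
    (hξ : ContDiff ℝ (⊤ : ℕ∞) ξ)
    (hunit : ∀ t, ‖deriv ξ t‖ = 1)
    (k τ r : ℝ → ℝ) (N B : ℝ → EuclideanSpace ℝ (Fin 3))
    (hk : ∀ t, k t = ‖deriv (deriv ξ) t‖)
    (hkpos : ∀ t, 0 < k t)
    (hN : ∀ t, N t = (k t)⁻¹ • deriv (deriv ξ) t)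
    (hB : ∀ t, B t = cross3 (deriv ξ t) (N t))
    (hτ : ∀ t, τ t = det3 (deriv ξ t) (deriv (deriv ξ) t) (deriv (deriv (deriv ξ)) t) / (k t) ^ 2)
    (hτne : ∀ t, τ t ≠ 0)
    (hr : ∀ t, r t = (k t)⁻¹)
    (e : ℝ → EuclideanSpace ℝ (Fin 3))
    (he : ∀ t, e t = ξ t + r t • N t + (deriv r t / τ t) • B t)
    (σ : ℝ → ℝ)
    (hσ : ∀ t, σ t = r t * τ t + deriv (fun s => deriv r s / τ s) t)
    (hσne : ∀ t, σ t ≠ 0) :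
    ∀ t, ‖cross3 (deriv e t) (deriv (deriv e) t)‖ / ‖deriv e t‖ ^ 3 = |τ t| / |σ t| ∧
      det3 (deriv e t) (deriv (deriv e) t) (deriv (deriv (deriv e)) t) /
        ‖cross3 (deriv e t) (deriv (deriv e) t)‖ ^ 2 = k t / σ t := by
  set T := deriv ξ with hTdef
  set A := deriv T with hAdef
  set J := deriv A with hJdef
  set F : ℝ → ℝ := fun s => deriv r s / τ s with hFdef
  -- smoothness
  have hle : ((⊤:ℕ∞) : WithTop ℕ∞) ≤ ⊤ := le_top
  have hxi : ContDiff ℝ (⊤:ℕ∞) ξ := hξ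
  have hTcd : ContDiff ℝ (⊤:ℕ∞) T := hTdef ▸ (contDiff_infty_iff_deriv.1 hxi).2
  have hAcd : ContDiff ℝ (⊤:ℕ∞) A := hAdef ▸ (contDiff_infty_iff_deriv.1 hTcd).2
  have hJcd : ContDiff ℝ (⊤:ℕ∞) J := hJdef ▸ (contDiff_infty_iff_deriv.1 hAcd).2
  have hd : ∀ {g : ℝ → ℝ}, ContDiff ℝ (⊤:ℕ∞) g → ∀ s, HasDerivAt g (deriv g s) s :=
    fun hg s => ((hg.differentiable (by simp)) s).hasDerivAt
  have hdE : ∀ {g : ℝ → EuclideanSpace ℝ (Fin 3)}, ContDiff ℝ (⊤:ℕ∞) g →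
      ∀ s, HasDerivAt g (deriv g s) s :=
    fun hg s => ((hg.differentiable (by simp)) s).hasDerivAt
  have hdξ : ∀ s, HasDerivAt ξ (T s) s := fun s => hdE hxi s
  have hdT : ∀ s, HasDerivAt T (A s) s := fun s => hAdef ▸ hdE hTcd s
  have hdA : ∀ s, HasDerivAt A (J s) s := fun s => hJdef ▸ hdE hAcd s
  have hAne : ∀ s, A s ≠ 0 := by
    intro s h
    have := hkpos s
    rw [hk s, h, norm_zero] at this
    exact lt_irrefl _ this
  have hkne : ∀ s, k s ≠ 0 := fun s => ne_of_gt (hkpos s)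
  have hkcd : ContDiff ℝ (⊤:ℕ∞) k := by
    have : k = fun s => ‖A s‖ := funext hk
    rw [this]; exact hAcd.norm ℝ hAne
  have hrcd : ContDiff ℝ (⊤:ℕ∞) r := by
    have : r = fun s => (k s)⁻¹ := funext hr
    rw [this]; exact hkcd.inv hkne
  have hdetcd : ContDiff ℝ (⊤:ℕ∞) (fun s => det3 (T s) (A s) (J s)) := by
    simp only [det3]
    exact (((contDiff_apply3 hTcd 0).mul ((contDiff_apply3 hAcd 1).mul (contDiff_apply3 hJcd 2)
        |>.sub ((contDiff_apply3 hAcd 2).mul (contDiff_apply3 hJcd 1)))).sub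
      ((contDiff_apply3 hTcd 1).mul ((contDiff_apply3 hAcd 0).mul (contDiff_apply3 hJcd 2)
        |>.sub ((contDiff_apply3 hAcd 2).mul (contDiff_apply3 hJcd 0))))).add
      ((contDiff_apply3 hTcd 2).mul ((contDiff_apply3 hAcd 0).mul (contDiff_apply3 hJcd 1)
        |>.sub ((contDiff_apply3 hAcd 1).mul (contDiff_apply3 hJcd 0))))
  have hτcd : ContDiff ℝ (⊤:ℕ∞) τ := by
    have : τ = fun s => det3 (T s) (A s) (J s) / (k s) ^ 2 := funext hτ
    rw [this]
    exact hdetcd.div (hkcd.pow 2) (fun s => pow_ne_zero 2 (hkne s))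
  have hFcd : ContDiff ℝ (⊤:ℕ∞) F := by
    rw [hFdef]
    exact ((contDiff_infty_iff_deriv.1 hrcd).2).div hτcd hτne
  have hσcd : ContDiff ℝ (⊤:ℕ∞) σ := by
    have : σ = fun s => r s * τ s + deriv F s := funext hσ
    rw [this]
    exact (hrcd.mul hτcd).add (contDiff_infty_iff_deriv.1 hFcd).2
  have hdr : ∀ s, HasDerivAt r (deriv r s) s := hd hrcd
  have hdF : ∀ s, HasDerivAt F (deriv F s) s := hd hFcd
  have hdσ : ∀ s, HasDerivAt σ (deriv σ s) s := hd hσcd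
  have hdσ2 : ∀ s, HasDerivAt (deriv σ) (deriv (deriv σ) s) s := hd (contDiff_infty_iff_deriv.1 hσcd).2
  have hdτ : ∀ s, HasDerivAt τ (deriv τ s) s := hd hτcd
  have hFs : ∀ s, F s = deriv r s / τ s := fun s => rfl
  -- inner product identities
  have iTT : ∀ s, ⟪T s, T s⟫ = 1 := by
    intro s; rw [real_inner_self_eq_norm_sq, hunit s]; norm_num
  have iTA : ∀ s, ⟪T s, A s⟫ = 0 := by
    intro s
    have h1 : HasDerivAt (fun u => ⟪T u, T u⟫) (⟪T s, A s⟫ + ⟪A s, T s⟫) s := (hdT s).inner ℝ (hdT s)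
    have h2 : HasDerivAt (fun u => ⟪T u, T u⟫) 0 s := by
      have : (fun u => ⟪T u, T u⟫) = fun _ => (1:ℝ) := funext iTT
      rw [this]; exact hasDerivAt_const s 1
    have h3 := h1.unique h2
    have h4 := real_inner_comm (T s) (A s)
    linarith
  have iAA : ∀ s, ⟪A s, A s⟫ = k s ^ 2 := by
    intro s; rw [real_inner_self_eq_norm_sq, hk s]
  have iTJ : ∀ s, ⟪T s, J s⟫ = -(k s ^ 2) := by
    intro s
    have h1 : HasDerivAt (fun u => ⟪T u, A u⟫) (⟪T s, J s⟫ + ⟪A s, A s⟫) s := (hdT s).inner ℝ (hdA s)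
    have h2 : HasDerivAt (fun u => ⟪T u, A u⟫) 0 s := by
      have : (fun u => ⟪T u, A u⟫) = fun _ => (0:ℝ) := funext iTA
      rw [this]; exact hasDerivAt_const s 0
    have h3 := h1.unique h2
    have h4 := iAA s
    linarith
  have iTN : ∀ s, ⟪T s, N s⟫ = 0 := by
    intro s; rw [hN s, real_inner_smul_right, iTA s, mul_zero]
  have iNN : ∀ s, ⟪N s, N s⟫ = 1 := by
    intro s
    rw [hN s, real_inner_smul_left, real_inner_smul_right, iAA s, ← mul_assoc, ← mul_inv_rev,
      ← pow_two, inv_mul_cancel₀ (pow_ne_zero 2 (hkne s))]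
  have iNA : ∀ s, ⟪N s, A s⟫ = k s := by
    intro s
    rw [hN s, real_inner_smul_left, iAA s, pow_two, ← mul_assoc,
      inv_mul_cancel₀ (hkne s), one_mul]
  have iTB : ∀ s, ⟪T s, B s⟫ = 0 := by
    intro s; rw [hB s]; exact inner_self_cross _ _
  have iNB : ∀ s, ⟪N s, B s⟫ = 0 := by
    intro s; rw [hB s]; exact inner_right_cross _ _
  have iBB : ∀ s, ⟪B s, B s⟫ = 1 := by
    intro s; rw [hB s, lagrange, iTT s, iNN s, iTN s]; norm_num
  have nB : ∀ s, ‖B s‖ = 1 := by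
    intro s
    have h := iBB s
    rw [real_inner_self_eq_norm_sq] at h
    nlinarith [norm_nonneg (B s)]
  have detTAJ : ∀ s, det3 (T s) (A s) (J s) = τ s * k s ^ 2 := by
    intro s
    rw [hτ s]
    exact (div_mul_cancel₀ _ (pow_ne_zero 2 (hkne s))).symm
  have iJB : ∀ s, ⟪J s, B s⟫ = τ s * k s := by
    intro s
    rw [hB s, hN s, real_inner_comm, ← det3_eq_inner, det3_smul_mid, detTAJ s]
    field_simp [hkne s]
    try ring
  have iAB : ∀ s, ⟪A s, B s⟫ = 0 := by
    intro s
    rw [hB s, hN s, real_inner_comm, ← det3_eq_inner, det3_smul_mid, det3_mid_eq_right, mul_zero]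
  -- derivative of N
  have hNf : N = fun s => r s • A s := funext fun s => by rw [hN s, hr s]
  have hdN : ∀ s, HasDerivAt N (r s • J s + deriv r s • A s) s := by
    intro s; rw [hNf]; exact (hdr s).smul (hdA s)
  have iNdT : ∀ s, ⟪r s • J s + deriv r s • A s, T s⟫ = -(k s) := by
    intro s
    rw [inner_add_left, real_inner_smul_left, real_inner_smul_left,
      real_inner_comm (T s) (J s), iTJ s, real_inner_comm (T s) (A s), iTA s, hr s]
    field_simp [hkne s]
    try ring
  have iNdN : ∀ s, ⟪r s • J s + deriv r s • A s, N s⟫ = 0 := by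
    intro s
    have h1 : HasDerivAt (fun u => ⟪N u, N u⟫)
        (⟪N s, r s • J s + deriv r s • A s⟫ + ⟪r s • J s + deriv r s • A s, N s⟫) s :=
      (hdN s).inner ℝ (hdN s)
    have h2 : HasDerivAt (fun u => ⟪N u, N u⟫) 0 s := by
      have : (fun u => ⟪N u, N u⟫) = fun _ => (1:ℝ) := funext iNN
      rw [this]; exact hasDerivAt_const s 1
    have h3 := h1.unique h2
    have h4 := real_inner_comm (N s) (r s • J s + deriv r s • A s)
    linarith
  have iNdB : ∀ s, ⟪r s • J s + deriv r s • A s, B s⟫ = τ s := by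
    intro s
    rw [inner_add_left, real_inner_smul_left, real_inner_smul_left, iJB s, iAB s, hr s]
    field_simp [hkne s]
    try ring
  have hNdeq : ∀ s, r s • J s + deriv r s • A s = (-(k s)) • T s + τ s • B s := by
    intro s
    have hexp := expansion (T s) (N s) (r s • J s + deriv r s • A s) (iTT s) (iNN s) (iTN s)
    rw [← hB s, iNdT s, iNdN s, iNdB s] at hexp
    rw [hexp]
    module
  -- derivative of B
  have hBf : B = fun s => cross3 (T s) (N s) := funext hB
  have hdB : ∀ s, HasDerivAt B
      (cross3 (A s) (N s) + cross3 (T s) (r s • J s + deriv r s • A s)) s := by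
    intro s; rw [hBf]; exact hasDerivAt_cross (hdT s) (hdN s)
  have hBdeq : ∀ s, cross3 (A s) (N s) + cross3 (T s) (r s • J s + deriv r s • A s)
      = (-(τ s)) • N s := by
    intro s
    have hA_eq : A s = k s • N s := by
      rw [hN s, smul_smul, mul_inv_cancel₀ (hkne s), one_smul]
    rw [hNdeq s, hA_eq]
    simp only [Aux.cross_smul_left, Aux.cross_add_right, Aux.cross_smul_right, Aux.cross_self,
      smul_zero, zero_add, add_zero]
    rw [hB s, Aux.triple, iTN s, iTT s]
    module
  -- first derivative of e
  have hef : e = fun s => ξ s + r s • N s + F s • B s := funext fun s => by rw [he s]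
  have hde1 : ∀ s, HasDerivAt e (σ s • B s) s := by
    intro s
    rw [hef]
    refine (((hdξ s).add ((hdr s).smul (hdN s))).add ((hdF s).smul (hdB s))).congr_deriv ?_
    rw [hBdeq s, hNdeq s]
    have h1 : r s * k s = 1 := by rw [hr s]; exact inv_mul_cancel₀ (hkne s)
    have h2 : F s * τ s = deriv r s := by rw [hFs s]; exact div_mul_cancel₀ _ (hτne s)
    have h3 : σ s = r s * τ s + deriv F s := hσ s
    match_scalars
    · linear_combination -h1
    · linear_combination -h3
    · linear_combination -h2
  have hde1f : deriv e = fun s => σ s • B s := funext fun s => (hde1 s).deriv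
  -- second derivative of e
  have hde2 : ∀ s, HasDerivAt (deriv e) (deriv σ s • B s - (σ s * τ s) • N s) s := by
    intro s
    rw [hde1f]
    refine ((hdσ s).smul (hdB s)).congr_deriv ?_
    rw [hBdeq s]
    module
  have hde2f : deriv (deriv e) = fun s => deriv σ s • B s - (σ s * τ s) • N s :=
    funext fun s => (hde2 s).deriv
  -- third derivative of e
  have hde3 : ∀ s, HasDerivAt (deriv (deriv e))
      ((σ s * τ s * k s) • T s - (2 * deriv σ s * τ s + σ s * deriv τ s) • N s
        + (deriv (deriv σ) s - σ s * τ s ^ 2) • B s) s := by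
    intro s
    rw [hde2f]
    refine (((hdσ2 s).smul (hdB s)).sub (((hdσ s).mul (hdτ s)).smul (hdN s))).congr_deriv ?_
    rw [hBdeq s, hNdeq s]
    simp only [Pi.mul_apply]
    module
  -- conclusion
  intro t
  have E1 : deriv e t = σ t • B t := by rw [hde1f]
  have E2 : deriv (deriv e) t = deriv σ t • B t - (σ t * τ t) • N t := by rw [hde2f]
  have E3v : deriv (deriv (deriv e)) t
      = (σ t * τ t * k t) • T t - (2 * deriv σ t * τ t + σ t * deriv τ t) • N t
        + (deriv (deriv σ) t - σ t * τ t ^ 2) • B t := by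
    have hf : deriv (deriv (deriv e)) = fun s => (σ s * τ s * k s) • T s
        - (2 * deriv σ s * τ s + σ s * deriv τ s) • N s
        + (deriv (deriv σ) s - σ s * τ s ^ 2) • B s := funext fun s => (hde3 s).deriv
    rw [hf]
  have hBN : cross3 (B t) (N t) = -(T t) := by
    rw [hB t, Aux.cross_anticomm, Aux.triple, iNN t, real_inner_comm (T t) (N t), iTN t]
    module
  have hcross : cross3 (deriv e t) (deriv (deriv e) t) = (σ t ^ 2 * τ t) • T t := by
    rw [E1, E2, Aux.cross_smul_left, Aux.cross_sub_right, Aux.cross_smul_right,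
      Aux.cross_smul_right, Aux.cross_self, hBN]
    module
  have hnorm_e1 : ‖deriv e t‖ = |σ t| := by
    rw [E1, norm_smul, nB t, Real.norm_eq_abs, mul_one]
  have hnorm_cross : ‖cross3 (deriv e t) (deriv (deriv e) t)‖ = σ t ^ 2 * |τ t| := by
    rw [hcross, norm_smul, hunit t, Real.norm_eq_abs, mul_one, abs_mul, abs_pow, sq_abs]
  have hdet : det3 (deriv e t) (deriv (deriv e) t) (deriv (deriv (deriv e)) t)
      = σ t ^ 3 * τ t ^ 2 * k t := by
    rw [det3_eq_inner, hcross, E3v, real_inner_smul_left, inner_add_right, inner_sub_right,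
      real_inner_smul_right, real_inner_smul_right, real_inner_smul_right,
      iTT t, iTN t, iTB t]
    ring
  constructor
  · rw [hnorm_cross, hnorm_e1]
    have h1 : |σ t| ≠ 0 := abs_ne_zero.2 (hσne t)
    rw [show |σ t| ^ 3 = σ t ^ 2 * |σ t| by rw [pow_succ, sq_abs]]
    exact mul_div_mul_left _ _ (pow_ne_zero 2 (hσne t))
  · rw [hdet, hnorm_cross]
    rw [show (σ t ^ 2 * |τ t|) ^ 2 = σ t ^ 4 * τ t ^ 2 by rw [mul_pow, sq_abs]; ring]
    have h4 : σ t ^ 4 * τ t ^ 2 ≠ 0 :=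
      mul_ne_zero (pow_ne_zero _ (hσne t)) (pow_ne_zero _ (hτne t))
    rw [div_eq_div_iff h4 (hσne t)]
    ring
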